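/- arXiv:1803.11034 — 4 statements merged into one kernel-verified Lean document; each statement's English description precedes it below -/
import Mathlib

section
/- For any distributions Δ_1, …, Δ_l of Σ, if Δ* is the greatest lower bound of {Δ_1, …, Δ_l} with respect to ≤_Σ (which exists), then ⋃_{i=1}^l I_{Δ_i} = I_{Δ*} (equivalently, ⋂_{i=1}^l D_{Δ_i} = D_{Δ*}). -/
/-- A *distribution* of the (finite) alphabet `α`: a family of non-empty,
pairwise incomparable (under set inclusion) sub-alphabets whose union is `α`.
Its size is `comps.ncard`. -/
structure Distr (α : Type) [Fintype α] where
  comps : Set (Set α)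
  comps_nonempty : ∀ S ∈ comps, S.Nonempty
  comps_cover : ∀ a : α, ∃ S ∈ comps, a ∈ S
  comps_incomp : ∀ S ∈ comps, ∀ T ∈ comps, S ≠ T → ¬ S ⊆ T

section Defs

variable {α : Type} [Fintype α]

/-- Natural projection `P_{Σ'}`: erase from a string all symbols not in `S`. -/
noncomputable def projA (S : Set α) (s : List α) : List α :=
  s.filter fun a => @decide (a ∈ S) (Classical.propDecidable _)

/-- `L` is decomposable with respect to `Δ`:
`L = ∥_i P_{Σ_i}(L) = ⋂_i P_{Σ_i}⁻¹(P_{Σ_i}(L))`. -/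
def Decomposable (L : Set (List α)) (Δ : Distr α) : Prop :=
  L = ⋂ S ∈ Δ.comps, projA S ⁻¹' (projA S '' L)

/-- The partial order `≤_Σ` on distributions: every component of `Δ` is
contained in some component of `Δ'`. -/
def DistLE (Δ Δ' : Distr α) : Prop :=
  ∀ S ∈ Δ.comps, ∃ T ∈ Δ'.comps, S ⊆ T

/-- `P` is a *reduction* of `Δ`. -/
def IsReduction (P : Set (Distr α)) (Δ : Distr α) : Prop :=
  2 ≤ P.ncard ∧
  (∀ Δ' ∈ P, Δ'.comps.ncard < Δ.comps.ncard) ∧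
  (∀ L : Set (List α), Decomposable L Δ ↔ ∀ Δ' ∈ P, Decomposable L Δ')

/-- The maximal members (under set inclusion) of a family of sets. -/
def MaximalMem {β : Type} (F : Set (Set β)) : Set (Set β) :=
  {S | S ∈ F ∧ ∀ T ∈ F, S ⊆ T → S = T}

/-- The dependence relation `D_Δ`. -/
def DepRel (Δ : Distr α) : Set (α × α) :=
  {p | ∃ S ∈ Δ.comps, p.1 ∈ S ∧ p.2 ∈ S}

/-- The independence relation `I_Δ = Σ × Σ − D_Δ`. -/
def IndepRel (Δ : Distr α) : Set (α × α) :=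
  {p | ¬ ∃ S ∈ Δ.comps, p.1 ∈ S ∧ p.2 ∈ S}

/-- `Σ' ⊑ Δ`: `Σ'` is contained in some component of `Δ`. -/
def SqSub (S : Set α) (Δ : Distr α) : Prop :=
  ∃ T ∈ Δ.comps, S ⊆ T

/-- `Δ` is the greatest lower bound of the family `D` with respect to `≤_Σ`. -/
def IsGLBFam {l : ℕ} (D : Fin l → Distr α) (Δ : Distr α) : Prop :=
  (∀ i, DistLE Δ (D i)) ∧
  ∀ Δ''' : Distr α, (∀ i, DistLE Δ''' (D i)) → DistLE Δ''' Δ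

/-- `Δ'` is *merged* from `Δ`: `Δ' ≠ (Σ)` and `Δ'` is obtained from a
partition of the components of `Δ` having at least one block of size ≥ 2 by
taking the unions over the blocks and keeping only the maximal resulting
sub-alphabets. -/
def MergedFrom (Δ' Δ : Distr α) : Prop :=
  Δ'.comps ≠ {Set.univ} ∧
  ∃ part : Set (Set (Set α)),
    (∀ B ∈ part, B.Nonempty) ∧
    (∀ B ∈ part, B ⊆ Δ.comps) ∧
    (∀ B ∈ part, ∀ C ∈ part, B ≠ C → Disjoint B C) ∧
    (∀ S ∈ Δ.comps, ∃ B ∈ part, S ∈ B) ∧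
    (∃ B ∈ part, ∃ S ∈ B, ∃ T ∈ B, S ≠ T) ∧
    Δ'.comps = MaximalMem {U : Set α | ∃ B ∈ part, U = ⋃₀ B}

/-- Membership in the search space `S_Δ`: a set of distributions merged from
`Δ` that are pairwise `≤_Σ`-incomparable. -/
def MemS (Δ : Distr α) (P : Set (Distr α)) : Prop :=
  (∀ Δ' ∈ P, MergedFrom Δ' Δ) ∧
  ∀ Δ₁ ∈ P, ∀ Δ₂ ∈ P, Δ₁ ≠ Δ₂ → ¬ DistLE Δ₁ Δ₂

/-- The ordering `≤_Δ` on sets of distributions: every member of `Q` has a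
member of `P` below it with respect to `≤_Σ`. -/
def SetLE (P Q : Set (Distr α)) : Prop :=
  ∀ Δ' ∈ Q, ∃ Δ'' ∈ P, DistLE Δ'' Δ'

/-- `[F]`: the `≤_Σ`-minimal members of a set of distributions. -/
def MinimalD (F : Set (Distr α)) : Set (Distr α) :=
  {Δ' | Δ' ∈ F ∧ ∀ Δ'' ∈ F, DistLE Δ'' Δ' → DistLE Δ' Δ''}

/-- `Δ'` is obtained from `Δ` by merging exactly two components `S ≠ T`
(and keeping only the maximal sub-alphabets); the members of `⊥(Δ)`. -/
def MinMergedFrom (Δ' Δ : Distr α) : Prop :=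
  ∃ S ∈ Δ.comps, ∃ T ∈ Δ.comps, S ≠ T ∧
    Δ'.comps = MaximalMem ((Δ.comps \ {S, T}) ∪ {S ∪ T})

/-- The set `A(Δ)` of shared symbols of a distribution. -/
def SharedSyms (Δ : Distr α) : Set α :=
  {a | ∃ S ∈ Δ.comps, ∃ T ∈ Δ.comps, S ≠ T ∧ a ∈ S ∧ a ∈ T}

/-- The substitution of `Δ'` into the component `C` of `Δ''` yields `Δs`:
`Δs` is obtained from the components of `Δ''` other than `C` together with the
intersections `C ∩ S` for components `S` of `Δ'`, keeping only the maximal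
non-empty members. -/
def SubstResult (Δ' Δ'' : Distr α) (C : Set α) (Δs : Distr α) : Prop :=
  Δs.comps =
    MaximalMem {T : Set α |
      T.Nonempty ∧ (T ∈ Δ''.comps \ {C} ∨ ∃ S ∈ Δ'.comps, T = C ∩ S)}

/-- One swap of two adjacent symbols forming a pair in `I`. -/
def SwapStep (I : Set (α × α)) (s t : List α) : Prop :=
  ∃ (u v : List α) (a b : α),
    (a, b) ∈ I ∧ s = u ++ a :: b :: v ∧ t = u ++ b :: a :: v

/-- Trace equivalence with respect to `I`: a finite sequence of swaps of
adjacent independent symbols. -/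
def TraceEquiv (I : Set (α × α)) : List α → List α → Prop :=
  Relation.ReflTransGen (SwapStep I)

/-- `L` is trace-closed with respect to `I`. -/
def TraceClosed (I : Set (α × α)) (L : Set (List α)) : Prop :=
  L = {t | ∃ s ∈ L, TraceEquiv I s t}

/-- The map `N` determined by the enumeration `c` of the components of a
distribution: `N(a) = {i : a ∉ Σ_i}`. -/
def Nmap {n : ℕ} (c : Fin n → Set α) (a : α) : Set (Fin n) :=
  {i | a ∉ c i}

/-- A simple path from `x` to `y` in the graph `(Σ, D)`: a list of pairwise
distinct symbols, starting at `x`, ending at `y`, with consecutive symbols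
related by `D`. -/
def IsSimplePath (D : Set (α × α)) (p : List α) (x y : α) : Prop :=
  p.Nodup ∧ p.head? = some x ∧ p.getLast? = some y ∧
    p.Chain' (fun a b => (a, b) ∈ D)

/-- `Cr_D(S, y)` (with `N` given by the enumeration `c`): the set of indices
`i` such that some simple path `p` from some `x ∈ S` to `y` in `(Σ, D)`
satisfies `i ∈ ⋂_{a ∈ p.dropLast} N(a)`. -/
def CrSet {n : ℕ} (c : Fin n → Set α) (D : Set (α × α)) (S : Set α) (y : α) :
    Set (Fin n) :=
  {i | ∃ x ∈ S, ∃ p : List α,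
    IsSimplePath D p x y ∧ ∀ a ∈ p.dropLast, i ∈ Nmap c a}

/-- The smallest set of distributions containing `Q` and closed under
substitution. -/
inductive SubstClosure (Q : Set (Distr α)) : Distr α → Prop
  | base (Δ' : Distr α) (h : Δ' ∈ Q) : SubstClosure Q Δ'
  | step (Δ' Δ'' Δs : Distr α) (C : Set α)
      (h1 : SubstClosure Q Δ') (h2 : SubstClosure Q Δ'')
      (hC : C ∈ Δ''.comps) (hA : SharedSyms Δ' ⊆ C)
      (hs : SubstResult Δ' Δ'' C Δs) : SubstClosure Q Δs

end Defs

section Count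

variable {α : Type} [Fintype α] [DecidableEq α]

/-- `L(Σ_j)` (with `j` 0-indexed, so the paper's exponent `j+1` is `j+2`
here): all strings containing exactly one occurrence of each `σ_i ∈ Σ_j` and
exactly `j+2` occurrences of each `σ_i ∉ Σ_j`. -/
def Lword {m : ℕ} (σ : Fin m → α) (Sj : Set α) (j : ℕ) : Set (List α) :=
  {s | ∀ i : Fin m,
    (σ i ∈ Sj → s.count (σ i) = 1) ∧ (σ i ∉ Sj → s.count (σ i) = j + 2)}

/-- The candidate counter example `L_cand = ⋃_j L(Σ_j)`, relative to an
enumeration `c` of the components and an enumeration `σ` of the alphabet. -/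
def Lcand {n m : ℕ} (c : Fin n → Set α) (σ : Fin m → α) : Set (List α) :=
  ⋃ j : Fin n, Lword σ (c j) (j : ℕ)

end Count

/-- Every member of a family of subsets of a finite type lies below a maximal member. -/
lemma exists_maximalMem {α : Type} [Fintype α] (F : Set (Set α)) (T : Set α)
    (hT : T ∈ F) : ∃ M ∈ MaximalMem F, T ⊆ M := by
  classical
  have key : ∀ n : ℕ, ∀ T ∈ F, Tᶜ.toFinset.card ≤ n → ∃ M ∈ MaximalMem F, T ⊆ M := by
    intro n
    induction n with
    | zero =>
      intro T hT hcard
      refine ⟨T, ⟨hT, fun U hU hTU => ?_⟩, subset_rfl⟩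
      have hc : Tᶜ = ∅ := by
        simpa [Set.toFinset_eq_empty] using Finset.card_eq_zero.mp (Nat.le_zero.mp hcard)
      have hTuniv : T = Set.univ := by
        rw [← Set.compl_empty, ← hc, compl_compl]
      subst hTuniv
      exact (Set.univ_subset_iff.mp hTU).symm
    | succ n ih =>
      intro T hT hcard
      by_cases hmax : ∀ U ∈ F, T ⊆ U → T = U
      · exact ⟨T, ⟨hT, hmax⟩, subset_rfl⟩
      · push_neg at hmax
        obtain ⟨U, hU, hTU, hne⟩ := hmax
        have hss : T ⊂ U := ⟨hTU, fun h => hne (subset_antisymm hTU h)⟩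
        have hcard' : Uᶜ.toFinset.card ≤ n := by
          have h1 : Uᶜ.toFinset ⊂ Tᶜ.toFinset := by
            rw [Set.toFinset_ssubset_toFinset]
            exact Set.ssubset_iff_of_subset (by intro x hx; simp at hx ⊢; exact fun h => hx (hss.1 h)) |>.mpr (by obtain ⟨x, hxU, hxT⟩ := Set.exists_of_ssubset hss; exact ⟨x, by simpa using hxT, by simp [hxU]⟩)
          have := Finset.card_lt_card h1
          omega
        obtain ⟨M, hM, hUM⟩ := ih U hU hcard'
        exact ⟨M, hM, hTU.trans hUM⟩
  exact key _ T hT le_rfl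

/-- The greatest lower bound `Δ*` of any family of
distributions exists, and `⋃_i I_{Δ_i} = I_{Δ*}` (equivalently,
`⋂_i D_{Δ_i} = D_{Δ*}`). -/
theorem statement_3 {α : Type} [Fintype α] (l : ℕ) (D : Fin l → Distr α) :
    (∃ Δg : Distr α, IsGLBFam D Δg) ∧
    ∀ Δs : Distr α, IsGLBFam D Δs →
      ((⋃ i, IndepRel (D i)) = IndepRel Δs ∧
       (⋂ i, DepRel (D i)) = DepRel Δs) := by
  classical
  set F : Set (Set α) := {T | T.Nonempty ∧ ∀ i, ∃ S ∈ (D i).comps, T ⊆ S} with hF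
  have hGcomps : ∀ M ∈ MaximalMem F, M ∈ F := fun M hM => hM.1
  let Δg : Distr α :=
    { comps := MaximalMem F
      comps_nonempty := fun S hS => (hGcomps S hS).1
      comps_cover := by
        intro a
        have hmem : ({a} : Set α) ∈ F := by
          refine ⟨Set.singleton_nonempty a, fun i => ?_⟩
          obtain ⟨S, hS, haS⟩ := (D i).comps_cover a
          exact ⟨S, hS, Set.singleton_subset_iff.mpr haS⟩
        obtain ⟨M, hM, hsub⟩ := exists_maximalMem F _ hmem
        exact ⟨M, hM, hsub (Set.mem_singleton a)⟩
      comps_incomp := by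
        intro S hS T hT hne hsub
        exact hne (hS.2 T hT.1 hsub) }
  have hglb : IsGLBFam D Δg := by
    constructor
    · intro i S hS
      exact (hGcomps S hS).2 i
    · intro Δ3 h S hS
      have hmem : S ∈ F := ⟨Δ3.comps_nonempty S hS, fun i => h i S hS⟩
      exact exists_maximalMem F S hmem
  refine ⟨⟨Δg, hglb⟩, ?_⟩
  intro Δs hΔs
  have hDep : (⋂ i, DepRel (D i)) = DepRel Δs := by
    ext ⟨a, b⟩
    simp only [Set.mem_iInter, DepRel, Set.mem_setOf_eq]
    constructor
    · intro h
      have hmem : ({a, b} : Set α) ∈ F := by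
        refine ⟨⟨a, by simp⟩, fun i => ?_⟩
        obtain ⟨S, hS, haS, hbS⟩ := h i
        exact ⟨S, hS, by intro x hx; rcases hx with h | h <;> simp_all⟩
      obtain ⟨M, hM, hsub⟩ := exists_maximalMem F _ hmem
      obtain ⟨T, hT, hMT⟩ := hΔs.2 Δg hglb.1 M hM
      exact ⟨T, hT, hMT (hsub (by simp)), hMT (hsub (by simp))⟩
    · rintro ⟨S, hS, haS, hbS⟩ i
      obtain ⟨T, hT, hST⟩ := hΔs.1 i S hS
      exact ⟨T, hT, hST haS, hST hbS⟩
  have hIcompl : ∀ Δ : Distr α, IndepRel Δ = (DepRel Δ)ᶜ := fun Δ => rfl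
  refine ⟨?_, hDep⟩
  rw [hIcompl, ← hDep]
  ext p
  simp [hIcompl, IndepRel, DepRel]
end

section
/- Let Δ = (Σ_1, …, Σ_n) be a distribution of Σ and let Δ' = (Σ'_1, …, Σ'_k) ∈ M(Δ). If there exists i ∈ [1, k] such that Σ'_i is not a component of Δ and Cr_Δ(Σ'_i, σ') = [1, n] for every σ' ∈ Σ − Σ'_i (where Cr_Δ is computed with N determined by Δ and with simple paths in the graph (Σ, D_Δ)), then L_cand is decomposable with respect to Δ'. -/
/-!
Let `s` lie in the synchronous product of the projections of `L_cand` onto the components of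
`Δ'`. On each component `T` of `Δ'` the letter counts of `s` agree with those of a word of
some `L(Σ_j)`; since the exponents `1` and `j + 2` tell the indices apart, two components of
`Δ'` that share a letter lying outside `Σ_j` must carry the same index `j`. Every component of
`Δ` lies inside a component of `Δ'`, so the index `j` chosen on `S` propagates along any
`D_Δ`-path whose inner letters all avoid `Σ_j`. The hypothesis `Cr_Δ(S, σ') = [1, n]` provides
such a path from `S` to every letter `σ'` outside `S`, hence `s` has the letter counts of
`L(Σ_j)` everywhere and lies in `L_cand`.
-/

theorem List.IsChain.propagate_of_forall_mem_dropLast {β : Type*} {r : β → β → Prop}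
    {C Q : β → Prop} (step : ∀ a b, r a b → C a → Q a → Q b) :
    ∀ {p : List β} {x y : β}, p.IsChain r → p.head? = some x → p.getLast? = some y →
      (∀ a ∈ p.dropLast, C a) → Q x → Q y
  | [], _, _, _, hx, _, _, _ => by simp at hx
  | [a], x, y, _, hx, hy, _, hQ => by
    obtain rfl : a = x := by simpa using hx
    obtain rfl : a = y := by simpa using hy
    exact hQ
  | a :: b :: t, x, y, hp, hx, hy, hC, hQ => by
    obtain rfl : a = x := by simpa using hx
    rw [List.isChain_cons_cons] at hp
    rw [List.dropLast_cons_cons] at hC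
    rw [List.getLast?_cons_cons] at hy
    exact propagate_of_forall_mem_dropLast step hp.2 rfl hy
      (fun u hu => hC u (List.mem_cons_of_mem _ hu)) (step a b hp.1 (hC a List.mem_cons_self) hQ)

theorem exists_mem_maximalMem_superset {α : Type} [Finite α] (F : Set (Set α)) {U : Set α}
    (hU : U ∈ F) : ∃ M ∈ MaximalMem F, U ⊆ M := by
  obtain ⟨M, hUM, hM, hmax⟩ := (Set.toFinite F).exists_le_maximal hU
  exact ⟨M, ⟨hM, fun T hT hMT => hMT.antisymm (hmax hT hMT)⟩, hUM⟩

theorem count_projA_of_mem {α : Type} [DecidableEq α] {S : Set α} {a : α} (ha : a ∈ S)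
    (s : List α) : (projA S s).count a = s.count a :=
  List.count_filter (@decide_eq_true _ (Classical.propDecidable _) ha)

section Distributions

variable {α : Type} [Fintype α]

theorem MergedFrom.distLE {Δ' Δ : Distr α} (hM : MergedFrom Δ' Δ) : DistLE Δ Δ' := by
  obtain ⟨-, part, -, -, -, hcover, -, hcomps⟩ := hM
  intro U hU
  obtain ⟨B, hB, hUB⟩ := hcover U hU
  obtain ⟨M, hM, hBM⟩ :=
    exists_mem_maximalMem_superset {U | ∃ B ∈ part, U = ⋃₀ B} ⟨B, hB, rfl⟩
  exact ⟨M, hcomps ▸ hM, (Set.subset_sUnion_of_mem hUB).trans hBM⟩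

theorem decomposable_of_iInter_subset {L : Set (List α)} {Δ : Distr α}
    (h : ⋂ S ∈ Δ.comps, projA S ⁻¹' (projA S '' L) ⊆ L) : Decomposable L Δ :=
  h.antisymm' fun s hs => Set.mem_iInter₂.mpr fun _ _ => ⟨s, hs, rfl⟩

end Distributions

section Candidate

variable {α : Type} {n m : ℕ} (c : Fin n → Set α)

/-- The number of occurrences of `a` prescribed in the words of `L(Σ_j)`, for `Σ_j = c j`. -/
noncomputable def lcandCount (j : Fin n) (a : α) : ℕ :=
  open Classical in if a ∈ c j then 1 else j + 2

variable {c}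

theorem eq_of_lcandCount_eq {j j' : Fin n} {a : α} (ha : a ∉ c j)
    (h : lcandCount c j' a = lcandCount c j a) : j' = j := by
  unfold lcandCount at h
  split_ifs at h <;> omega

theorem mem_Lcand_iff [DecidableEq α] {σ : Fin m → α} (hσ : Function.Surjective σ)
    {s : List α} : s ∈ Lcand c σ ↔ ∃ j, ∀ a, s.count a = lcandCount c j a := by
  simp only [Lcand, Lword, Set.mem_iUnion, Set.mem_ofPred_eq, hσ.forall, lcandCount]
  refine exists_congr fun j => forall_congr' fun i => ?_
  split_ifs with h <;> simp [h]

theorem exists_lcandCount_of_mem_preimage_projA [DecidableEq α] {σ : Fin m → α}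
    (hσ : Function.Surjective σ) {T : Set α} {s : List α}
    (hs : s ∈ projA T ⁻¹' (projA T '' Lcand c σ)) :
    ∃ j, ∀ a ∈ T, s.count a = lcandCount c j a := by
  obtain ⟨w, hw, hproj⟩ := hs
  obtain ⟨j, hj⟩ := (mem_Lcand_iff hσ).mp hw
  refine ⟨j, fun a ha => ?_⟩
  rw [← count_projA_of_mem ha, ← hproj, count_projA_of_mem ha, hj]

theorem decomposable_Lcand_of_distLE [Fintype α] [DecidableEq α] {Δ Δ' : Distr α}
    (hΔ : DistLE Δ Δ') {σ : Fin m → α} (hσ : Function.Surjective σ) {S : Set α}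
    (hS : S ∈ Δ'.comps) (hCr : ∀ y, y ∉ S → CrSet c (DepRel Δ) S y = Set.univ) :
    Decomposable (Lcand c σ) Δ' := by
  refine decomposable_of_iInter_subset fun s hs => ?_
  have hlocal : ∀ T ∈ Δ'.comps, ∃ j, ∀ a ∈ T, s.count a = lcandCount c j a := fun T hT =>
    exists_lcandCount_of_mem_preimage_projA hσ (Set.mem_iInter₂.mp hs T hT)
  obtain ⟨j, hj⟩ := hlocal S hS
  have step : ∀ a b, (a, b) ∈ DepRel Δ → a ∉ c j →
      s.count a = lcandCount c j a → s.count b = lcandCount c j b := by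
    rintro a b ⟨U, hU, haU, hbU⟩ ha hca
    obtain ⟨T, hT, hUT⟩ := hΔ U hU
    obtain ⟨k, hk⟩ := hlocal T hT
    obtain rfl : k = j := eq_of_lcandCount_eq ha ((hk a (hUT haU)).symm.trans hca)
    exact hk b (hUT hbU)
  refine (mem_Lcand_iff hσ).mpr ⟨j, fun y => ?_⟩
  by_cases hy : y ∈ S
  · exact hj y hy
  obtain ⟨x, hx, p, ⟨-, hpx, hpy, hchain⟩, hN⟩ : j ∈ CrSet c (DepRel Δ) S y :=
    hCr y hy ▸ Set.mem_univ j
  exact hchain.propagate_of_forall_mem_dropLast step hpx hpy hN (hj x hx)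

end Candidate

theorem statement_7_general {α : Type} [Fintype α] [DecidableEq α] (Δ Δ' : Distr α)
    (hM : MergedFrom Δ' Δ)
    (n m : ℕ) (c : Fin n → Set α)
    (σ : Fin m → α) (hσ : Function.Bijective σ)
    (h : ∃ S ∈ Δ'.comps, S ∉ Δ.comps ∧
      ∀ y : α, y ∉ S → CrSet c (DepRel Δ) S y = Set.univ) :
    Decomposable (Lcand c σ) Δ' := by
  obtain ⟨S, hS, -, hCr⟩ := h
  exact decomposable_Lcand_of_distLE hM.distLE hσ.surjective hS hCr

/-- If `Δ' ∈ M(Δ)` has a component `S` that is not a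
component of `Δ` with `Cr_Δ(S, σ') = [1, n]` for every `σ' ∈ Σ − S`
(with `N` determined by `Δ` and simple paths in `(Σ, D_Δ)`), then
`L_cand` is decomposable with respect to `Δ'`. -/
theorem statement_7 {α : Type} [Fintype α] [DecidableEq α] (Δ Δ' : Distr α)
    (hM : MergedFrom Δ' Δ)
    (n m : ℕ) (c : Fin n → Set α)
    (hc1 : Function.Injective c) (hc2 : Set.range c = Δ.comps)
    (σ : Fin m → α) (hσ : Function.Bijective σ)
    (h : ∃ S ∈ Δ'.comps, S ∉ Δ.comps ∧
      ∀ y : α, y ∉ S → CrSet c (DepRel Δ) S y = Set.univ) :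
    Decomposable (Lcand c σ) Δ' :=
  statement_7_general Δ Δ' hM n m c σ hσ h
end

section
/- Let Δ = (Σ_1, …, Σ_n) be a distribution of Σ. If for every pair of distinct components Σ_i, Σ_j of Δ with Σ_i ∪ Σ_j ≠ Σ and every σ' ∈ Σ − (Σ_i ∪ Σ_j) it holds that Cr_Δ(Σ_i ∪ Σ_j, σ') = [1, n] (where Cr_Δ is computed with N determined by Δ and with simple paths in the graph (Σ, D_Δ)), then Δ has no reduction. -/
/-!
Let `Δ'` be a member of a reduction of `Δ`. Every language decomposable for `Δ` is decomposable
for `Δ'`, and testing this on the language "one letter of `S` twice, the others of `S` once"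
shows that every component `S` of `Δ` lies in a component of `Δ'`. Since `Δ'` has fewer
components, two distinct components `S ≠ T` of `Δ` lie in one component `C` of `Δ'`; in
particular `Δ` has at least two components, none of them equal to `Σ`.

The candidate language `L_cand = ⋃_j L(Σ_j)` is then never decomposable for `Δ`, so it fails
to be decomposable for some `Δ'` of the reduction. But it is decomposable for every such `Δ'`:
a word `w` of the parallel composition agrees on `C` with some `L(Σ_j)`. For `y ∉ S ∪ T`, the
hypothesis `Cr_Δ(S ∪ T, y) ∋ j` gives a dependence path from `S ∪ T` to `y` whose inner letters
lie outside `Σ_j`; each of them occurs `j + 2` times in `w`, a count that identifies the index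
`j` of any component of `Δ'` containing both it and its successor, so the pattern of `L(Σ_j)`
propagates along the path up to `y`. Hence `w ∈ L(Σ_j)`.
-/

theorem List.IsChain.propagate {β : Type*} {R : β → β → Prop} {G B : β → Prop}
    (step : ∀ ⦃a b⦄, R a b → G a → B a → G b) :
    ∀ {p : List β} {x y : β}, p.IsChain R → p.head? = some x → p.getLast? = some y →
      (∀ a ∈ p.dropLast, B a) → G x → G y
  | [], _, _, _, hx, _, _, _ => by simp at hx
  | [a], x, y, _, hx, hy, _, hG => by
    simp only [List.head?_cons, List.getLast?_singleton, Option.some.injEq] at hx hy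
    exact hy ▸ hx ▸ hG
  | a :: b :: l, x, y, hch, hx, hy, hB, hG => by
    simp only [List.head?_cons, Option.some.injEq] at hx
    subst hx
    rw [List.isChain_cons_cons] at hch
    rw [List.dropLast_cons_cons] at hB
    exact propagate step hch.2 rfl (by simpa using hy) (fun c hc => hB c (.tail _ hc))
      (step hch.1 hG (hB a (.head _)))

theorem exists_list_count_eq {β : Type*} [Fintype β] [DecidableEq β] (f : β → ℕ) :
    ∃ w : List β, ∀ a, w.count a = f a :=
  ⟨(Finsupp.toMultiset (Finsupp.equivFunOnFinite.symm f)).toList, fun a => by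
    rw [← Multiset.coe_count, Multiset.coe_toList, Finsupp.count_toMultiset]
    rfl⟩

theorem Distr.ne_univ_of_ne {α : Type} [Fintype α] (Δ : Distr α) {S T U : Set α}
    (hS : S ∈ Δ.comps) (hT : T ∈ Δ.comps) (hST : S ≠ T) (hU : U ∈ Δ.comps) :
    U ≠ Set.univ := by
  rintro rfl
  obtain ⟨V, hV, hVU⟩ : ∃ V ∈ Δ.comps, V ≠ Set.univ := by
    by_cases hS' : S = Set.univ
    · exact ⟨T, hT, hS' ▸ hST.symm⟩
    · exact ⟨S, hS, hS'⟩
  exact Δ.comps_incomp V hV _ hU hVU (Set.subset_univ V)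

theorem exists_ne_union_subset_of_ncard_lt {α : Type} [Fintype α] {Δ Δ' : Distr α}
    (hle : DistLE Δ Δ') (hlt : Δ'.comps.ncard < Δ.comps.ncard) :
    ∃ S ∈ Δ.comps, ∃ T ∈ Δ.comps, S ≠ T ∧ ∃ C ∈ Δ'.comps, S ∪ T ⊆ C := by
  choose! f hf hsub using hle
  obtain ⟨S, hS, T, hT, hne, hfST⟩ := Set.exists_ne_map_eq_of_ncard_lt_of_maps_to hlt hf
  exact ⟨S, hS, T, hT, hne, f S, hf S hS,
    Set.union_subset (hsub S hS) (hfST ▸ hsub T hT)⟩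

section Projection

variable {α : Type}

theorem projA_append_of_forall_notMem (S : Set α) (w : List α) {e : List α}
    (he : ∀ a ∈ e, a ∉ S) : projA S (w ++ e) = projA S w := by
  have he' : e.filter (fun a => @decide (a ∈ S) (Classical.propDecidable _)) = [] :=
    List.filter_eq_nil_iff.2 fun a ha => by simpa using he a ha
  rw [projA, projA, List.filter_append, he', List.append_nil]

theorem decomposable_iff_iInter_subset [Fintype α] {L : Set (List α)} {Δ : Distr α} :
    Decomposable L Δ ↔ (⋂ S ∈ Δ.comps, projA S ⁻¹' (projA S '' L)) ⊆ L :=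
  ⟨fun h => h.symm.subset, fun h =>
    h.antisymm' fun w hw => Set.mem_iInter₂.2 fun _ _ => ⟨w, hw, rfl⟩⟩

variable [DecidableEq α]

theorem count_eq_of_projA_eq {S : Set α} {a : α} (ha : a ∈ S) {u v : List α}
    (h : projA S u = projA S v) : u.count a = v.count a := by
  have hfilter (w : List α) : (projA S w).count a = w.count a :=
    List.count_filter (by simpa using ha)
  rw [← hfilter u, ← hfilter v, h]

theorem decomposable_of_count_invariant [Fintype α] {L : Set (List α)} {Δ : Distr α} {S : Set α}
    (hS : S ∈ Δ.comps) (hL : ∀ u v, (∀ a ∈ S, u.count a = v.count a) → u ∈ L → v ∈ L) :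
    Decomposable L Δ := by
  refine decomposable_iff_iInter_subset.2 fun w hw => ?_
  obtain ⟨u, hu, huw⟩ := Set.mem_iInter₂.1 hw S hS
  exact hL u w (fun a ha => count_eq_of_projA_eq ha huw) hu

end Projection

theorem distLE_of_decomposable_imp {α : Type} [Fintype α] {Δ Δ' : Distr α}
    (hdom : ∀ L : Set (List α), Decomposable L Δ → Decomposable L Δ') : DistLE Δ Δ' := by
  classical
  intro S hS
  by_contra! hnot
  let L : Set (List α) := {w | ∃ a ∈ S, w.count a = 2 ∧ ∀ b ∈ S, b ≠ a → w.count b = 1}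
  have hL : Decomposable L Δ' := hdom L <| decomposable_of_count_invariant hS
    fun u v huv ⟨a, ha, ha2, hb1⟩ => ⟨a, ha, huv a ha ▸ ha2,
      fun b hb hba => huv b hb ▸ hb1 b hb hba⟩
  obtain ⟨w, hw⟩ := exists_list_count_eq (fun _ : α => 1)
  suffices w ∈ L by
    obtain ⟨a, -, ha2, -⟩ := this
    simp [hw a] at ha2
  refine decomposable_iff_iInter_subset.1 hL (Set.mem_iInter₂.2 fun T hT => ?_)
  obtain ⟨s, hsS, hsT⟩ := Set.not_subset.1 (hnot T hT)
  refine ⟨w ++ [s], ⟨s, hsS, ?_, fun b _ hbs => ?_⟩,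
    projA_append_of_forall_notMem T w (by simpa using hsT)⟩
  · simp [hw]
  · simp [hw, Ne.symm hbs]

section Candidate

variable {α : Type} [DecidableEq α] {n m : ℕ}

def LwordCount (S : Set α) (k : ℕ) (w : List α) (a : α) : Prop :=
  (a ∈ S → w.count a = 1) ∧ (a ∉ S → w.count a = k + 2)

theorem mem_lword_iff {σ : Fin m → α} (hσ : Function.Surjective σ) {S : Set α} {k : ℕ}
    {w : List α} : w ∈ Lword σ S k ↔ ∀ a, LwordCount S k w a :=
  ⟨fun h a => by obtain ⟨i, rfl⟩ := hσ a; exact h i, fun h i => h (σ i)⟩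

theorem exists_lwordCount_of_mem_image_projA {c : Fin n → Set α} {σ : Fin m → α}
    (hσ : Function.Surjective σ) {T : Set α} {w : List α}
    (hw : projA T w ∈ projA T '' Lcand c σ) :
    ∃ j : Fin n, ∀ a ∈ T, LwordCount (c j) j w a := by
  obtain ⟨u, hu, huw⟩ := hw
  obtain ⟨j, hj⟩ := Set.mem_iUnion.1 hu
  refine ⟨j, fun a ha => ?_⟩
  rw [LwordCount, ← count_eq_of_projA_eq ha huw]
  exact (mem_lword_iff hσ).1 hj a

theorem not_decomposable_lcand [Fintype α] {Δ : Distr α} {c : Fin n → Set α}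
    (hc : Δ.comps ⊆ Set.range c) (hnu : ∀ j, c j ≠ Set.univ) {σ : Fin m → α} (hσ : Function.Surjective σ) :
    ¬ Decomposable (Lcand c σ) Δ := by
  obtain ⟨w, hw⟩ := exists_list_count_eq (fun _ : α => 1)
  have hnotMem : w ∉ Lcand c σ := fun hmem => by
    obtain ⟨j, hj⟩ := Set.mem_iUnion.1 hmem
    obtain ⟨a, ha⟩ := (Set.ne_univ_iff_exists_notMem _).1 (hnu j)
    have := ((mem_lword_iff hσ).1 hj a).2 ha
    rw [hw] at this
    omega
  refine fun hdec => hnotMem (decomposable_iff_iInter_subset.1 hdec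
    (Set.mem_iInter₂.2 fun S hS => ?_))
  obtain ⟨k, rfl⟩ := hc hS
  classical
  obtain ⟨e, he⟩ := exists_list_count_eq fun a => if a ∈ c k then 0 else (k : ℕ) + 1
  have heOut : ∀ a ∈ e, a ∉ c k := fun a ha hak => by
    simpa [he, hak] using List.count_pos_iff.2 ha
  refine ⟨w ++ e, Set.mem_iUnion.2 ⟨k, (mem_lword_iff hσ).2 fun a => ?_⟩,
    projA_append_of_forall_notMem _ w heOut⟩
  constructor <;> intro ha
  · simp [hw, he, ha]
  · simp [hw, he, ha]
    omega

theorem decomposable_lcand [Fintype α] {Δ Δ' : Distr α} {c : Fin n → Set α} {σ : Fin m → α}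
    (hσ : Function.Surjective σ) (hle : DistLE Δ Δ') {U C : Set α} (hC : C ∈ Δ'.comps)
    (hUC : U ⊆ C) (hCr : ∀ y ∉ U, CrSet c (DepRel Δ) U y = Set.univ) :
    Decomposable (Lcand c σ) Δ' := by
  refine decomposable_iff_iInter_subset.2 fun w hw => ?_
  have hcomp (T) (hT : T ∈ Δ'.comps) : ∃ j : Fin n, ∀ a ∈ T, LwordCount (c j) j w a :=
    exists_lwordCount_of_mem_image_projA hσ (Set.mem_iInter₂.1 hw T hT)
  obtain ⟨j, hj⟩ := hcomp C hC
  have step : ∀ ⦃a b⦄, (a, b) ∈ DepRel Δ → LwordCount (c j) j w a → a ∉ c j →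
      LwordCount (c j) j w b := by
    rintro a b ⟨S, hS, haS, hbS⟩ ha hac
    obtain ⟨T, hT, hST⟩ := hle S hS
    obtain ⟨i, hi⟩ := hcomp T hT
    have hij : i = j := by
      have hcount := ha.2 hac
      by_cases hai : a ∈ c i
      · have := (hi a (hST haS)).1 hai; omega
      · have := (hi a (hST haS)).2 hai; omega
    exact hij ▸ hi b (hST hbS)
  refine Set.mem_iUnion.2 ⟨j, (mem_lword_iff hσ).2 fun y => ?_⟩
  by_cases hy : y ∈ U
  · exact hj y (hUC hy)
  · obtain ⟨x, hx, p, ⟨-, hpx, hpy, hchain⟩, hpN⟩ := (hCr y hy).symm ▸ Set.mem_univ j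
    exact List.IsChain.propagate step hchain hpx hpy hpN (hj x (hUC hx))

end Candidate

theorem statement_8_general {α : Type} [Fintype α] (Δ : Distr α)
    (n : ℕ) (c : Fin n → Set α)
    (hc2 : Set.range c = Δ.comps)
    (h : ∀ S ∈ Δ.comps, ∀ T ∈ Δ.comps, S ≠ T → S ∪ T ≠ Set.univ →
      ∀ y : α, y ∉ S ∪ T → CrSet c (DepRel Δ) (S ∪ T) y = Set.univ) :
    ¬ ∃ P : Set (Distr α), IsReduction P Δ := by
  classical
  rintro ⟨P, hcard, hlt, hiff⟩
  have hle (Δ') (hΔ' : Δ' ∈ P) : DistLE Δ Δ' :=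
    distLE_of_decomposable_imp fun L hL => (hiff L).1 hL Δ' hΔ'
  have hmerge (Δ') (hΔ' : Δ' ∈ P) :
      ∃ S ∈ Δ.comps, ∃ T ∈ Δ.comps, S ≠ T ∧ ∃ C ∈ Δ'.comps, S ∪ T ⊆ C :=
    exists_ne_union_subset_of_ncard_lt (hle Δ' hΔ') (hlt Δ' hΔ')
  obtain ⟨Δ₀, hΔ₀⟩ := Set.nonempty_of_ncard_ne_zero (by omega : P.ncard ≠ 0)
  obtain ⟨S₀, hS₀, T₀, hT₀, hne₀, -⟩ := hmerge Δ₀ hΔ₀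
  let σ := (Fintype.equivFin α).symm
  have hndec := not_decomposable_lcand hc2.ge
    (fun j => Δ.ne_univ_of_ne hS₀ hT₀ hne₀ (hc2 ▸ Set.mem_range_self j)) σ.surjective
  rw [hiff] at hndec
  push Not at hndec
  obtain ⟨Δ', hΔ', hnd⟩ := hndec
  obtain ⟨S, hS, T, hT, hne, C, hC, hsub⟩ := hmerge Δ' hΔ'
  refine hnd (decomposable_lcand σ.surjective (hle Δ' hΔ') hC hsub fun y hy => ?_)
  exact h S hS T hT hne (fun hU => hy (hU ▸ Set.mem_univ y)) y hy

/-- If for every pair of distinct components `S, T` of `Δ`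
with `S ∪ T ≠ Σ` and every `σ' ∈ Σ − (S ∪ T)` one has
`Cr_Δ(S ∪ T, σ') = [1, n]`, then `Δ` has no reduction. -/
theorem statement_8 {α : Type} [Fintype α] (Δ : Distr α)
    (n : ℕ) (c : Fin n → Set α)
    (hc1 : Function.Injective c) (hc2 : Set.range c = Δ.comps)
    (h : ∀ S ∈ Δ.comps, ∀ T ∈ Δ.comps, S ≠ T → S ∪ T ≠ Set.univ →
      ∀ y : α, y ∉ S ∪ T → CrSet c (DepRel Δ) (S ∪ T) y = Set.univ) :
    ¬ ∃ P : Set (Distr α), IsReduction P Δ :=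
  statement_8_general Δ n c hc2 h
end

section
/- For every n ≥ 3 and every alphabet Σ = {a_0, a_1, …, a_{n−1}} consisting of n pairwise distinct symbols, the ring distribution Δ = ({a_0, a_1}, {a_1, a_2}, …, {a_{n−2}, a_{n−1}}, {a_{n−1}, a_0}) of Σ has no reduction. -/
/-!
Each two-letter language `{a_i a_{i+1}}` is decomposable with respect to the ring, so a
reduction `P` forces every member of `P` to contain each edge `{a_i, a_{i+1}}` in one of its
components; having fewer than `n` components, such a member holds two distinct edges in a
single component. The words whose letter counts follow one of the profiles `ringProfile j`
form a language that is not decomposable with respect to the ring (the empty word matches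
the `j`-th block on the `j`-th edge) but is decomposable with respect to every member of `P`:
a count vector that matches profiles edge by edge is a single global profile as soon as it
is non-zero somewhere, and the component holding two edges excludes the zero vector.
-/

open scoped Fin.CommRing

section Projection

variable {α : Type}

lemma mem_projA {S : Set α} {w : List α} {x : α} : x ∈ projA S w ↔ x ∈ w ∧ x ∈ S := by
  simp [projA]

lemma projA_eq_nil_iff {S : Set α} {w : List α} : projA S w = [] ↔ ∀ x ∈ w, x ∉ S := by
  simp [projA, List.filter_eq_nil_iff]

lemma projA_eq_self {S : Set α} {w : List α} (h : ∀ x ∈ w, x ∈ S) : projA S w = w := by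
  simpa [projA, List.filter_eq_self] using h

lemma count_projA [DecidableEq α] {S : Set α} {x : α} (hx : x ∈ S) (w : List α) :
    (projA S w).count x = w.count x :=
  List.count_filter (by simpa using hx)

end Projection

section Decomposable

variable {α : Type} [Fintype α]

lemma subset_iInter_preimage_projA_image (L : Set (List α)) (Δ : Distr α) :
    L ⊆ ⋂ S ∈ Δ.comps, projA S ⁻¹' (projA S '' L) :=
  fun w hw => Set.mem_iInter₂.2 fun _ _ => ⟨w, hw, rfl⟩

lemma decomposable_iff_subset {L : Set (List α)} {Δ : Distr α} :
    Decomposable L Δ ↔ ⋂ S ∈ Δ.comps, projA S ⁻¹' (projA S '' L) ⊆ L :=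
  ⟨fun h => h.symm.subset, fun h => (subset_iInter_preimage_projA_image L Δ).antisymm h⟩

/-- A word lies in the synchronous product of `{u}` only if all its letters occur in `u`,
so it is its own projection onto a component containing `u`. -/
lemma decomposable_singleton_of_subset {Δ : Distr α} {S : Set α} (hS : S ∈ Δ.comps)
    {u : List α} (hu : ∀ x ∈ u, x ∈ S) : Decomposable {u} Δ := by
  refine decomposable_iff_subset.2 fun w hw => ?_
  have hproj : ∀ T ∈ Δ.comps, projA T w = projA T u := by
    intro T hT
    obtain ⟨u', rfl, hu'⟩ := Set.mem_iInter₂.1 hw T hT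
    exact hu'.symm
  have hwS : ∀ x ∈ w, x ∈ S := by
    intro x hx
    obtain ⟨T, hT, hxT⟩ := Δ.comps_cover x
    have hx' : x ∈ projA T u := hproj T hT ▸ mem_projA.2 ⟨hx, hxT⟩
    exact hu x (mem_projA.1 hx').1
  rw [Set.mem_singleton_iff, ← projA_eq_self hwS, hproj S hS, projA_eq_self hu]

/-- If no component contains both `x` and `y`, then `[y, x]` has the same projections as
`[x, y]`. -/
lemma exists_comp_of_decomposable_pair {Δ : Distr α} {x y : α} (hxy : x ≠ y)
    (h : Decomposable {[x, y]} Δ) : ∃ S ∈ Δ.comps, x ∈ S ∧ y ∈ S := by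
  by_contra! hsep
  have hswap : [y, x] ∈ ⋂ S ∈ Δ.comps, projA S ⁻¹' (projA S '' {[x, y]}) := by
    refine Set.mem_iInter₂.2 fun S hS => ⟨[x, y], rfl, ?_⟩
    by_cases hx : x ∈ S
    · simp [projA, hx, hsep S hS hx]
    · by_cases hy : y ∈ S <;> simp [projA, hx, hy]
  rw [← h, Set.mem_singleton_iff, List.cons.injEq] at hswap
  exact hxy hswap.1.symm

lemma exists_comp_mem_of_decomposable_imp {Δ Δ' : Distr α}
    (h : ∀ L, Decomposable L Δ → Decomposable L Δ') {S : Set α} (hS : S ∈ Δ.comps) {x y : α}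
    (hxy : x ≠ y) (hx : x ∈ S) (hy : y ∈ S) : ∃ T ∈ Δ'.comps, x ∈ T ∧ y ∈ T :=
  exists_comp_of_decomposable_pair hxy
    (h _ (decomposable_singleton_of_subset hS (by simp [hx, hy])))

lemma exists_comp_superset_of_ncard_lt {ι : Type} [Finite ι] {Δ : Distr α} {f : ι → Set α}
    (hf : ∀ i, ∃ S ∈ Δ.comps, f i ⊆ S) (hcard : Δ.comps.ncard < Nat.card ι) :
    ∃ S ∈ Δ.comps, ∃ i c, i ≠ c ∧ f i ⊆ S ∧ f c ⊆ S := by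
  choose T hT using hf
  obtain ⟨i, -, c, -, hic, hTic⟩ := Set.exists_ne_map_eq_of_ncard_lt_of_maps_to
    (s := Set.univ) (by rwa [Set.ncard_univ]) (fun i _ => (hT i).1)
  exact ⟨T i, (hT i).1, i, c, hic, (hT i).2, hTic ▸ (hT c).2⟩

lemma exists_list_count_eq_s9 [DecidableEq α] (k : α → ℕ) : ∃ w : List α, ∀ x, w.count x = k x :=
  ⟨(Finsupp.toMultiset (Finsupp.equivFunOnFinite.symm k)).toList, fun x => by
    rw [← Multiset.coe_count, Multiset.coe_toList, Finsupp.count_toMultiset]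
    rfl⟩

end Decomposable

lemma Fin.add_natCast_ne_self {n t : ℕ} [NeZero n] (ht : 0 < t) (htn : t < n) (i : Fin n) :
    i + (t : Fin n) ≠ i := fun h =>
  Nat.not_dvd_of_pos_of_lt ht htn (Fin.natCast_eq_zero.1 (by linear_combination h))

lemma Fin.natCast_add_three_eq_zero (l : ℕ) : (l : Fin (l + 3)) + 3 = 0 := by
  have h := Fin.natCast_self (l + 3)
  push_cast at h
  exact h

lemma Fin.eq_or_eq_add_one_or_eq_add_two_add {l : ℕ} (i j : Fin (l + 3)) :
    i = j ∨ i = j + 1 ∨ ∃ t ≤ l, i = j + 2 + (t : Fin (l + 3)) := by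
  set d : Fin (l + 3) := i - j - 2 with hd
  have hi : i = j + 2 + ((d : ℕ) : Fin (l + 3)) := by rw [Fin.cast_val_eq_self, hd]; ring
  obtain ht | ht | ht : (d : ℕ) ≤ l ∨ (d : ℕ) = l + 1 ∨ (d : ℕ) = l + 2 := by
    have := d.isLt
    omega
  · exact Or.inr (Or.inr ⟨_, ht, hi⟩)
  · left; rw [hi, ht]; push_cast; linear_combination Fin.natCast_add_three_eq_zero l
  · right; left; rw [hi, ht]; push_cast; linear_combination Fin.natCast_add_three_eq_zero l

section RingProfile

variable {n : ℕ} [NeZero n]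

/-- Letter counts of the `j`-th block of the counter-example language; every non-zero entry
determines `j`. -/
def ringProfile (j i : Fin n) : ℕ :=
  if i = j ∨ i = j + 1 then 0 else (j : ℕ) + 1

lemma ringProfile_eq_zero_iff {j i : Fin n} : ringProfile j i = 0 ↔ i = j ∨ i = j + 1 := by
  unfold ringProfile
  split_ifs with h <;> simp [h]

lemma eq_of_ringProfile_eq {j j' i : Fin n} (h : ringProfile j' i = ringProfile j i)
    (h0 : ringProfile j i ≠ 0) : j' = j := by
  unfold ringProfile at h h0
  split_ifs at h h0 <;> exact Fin.ext (by omega)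

lemma ringProfile_add_two_add_ne_zero {t : ℕ} (ht : t + 3 ≤ n) (j : Fin n) :
    ringProfile j (j + 2 + (t : Fin n)) ≠ 0 := by
  rw [Ne, ringProfile_eq_zero_iff, not_or]
  have h2 := Fin.add_natCast_ne_self (t := t + 2) (by omega) (by omega) j
  have h1 := Fin.add_natCast_ne_self (t := t + 1) (by omega) (by omega) (j + 1)
  push_cast at h1 h2
  exact ⟨fun h => h2 (by linear_combination h), fun h => h1 (by linear_combination h)⟩

lemma ringProfile_add_two_ne_zero (hn : 3 ≤ n) (j : Fin n) : ringProfile j (j + 2) ≠ 0 := by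
  simpa using ringProfile_add_two_add_ne_zero (t := 0) (by omega) j

lemma eq_of_ringProfile_eq_zero (hn : 3 ≤ n) {j m : Fin n} (h : ringProfile j m = 0)
    (h' : ringProfile j (m + 1) = 0) : m = j := by
  rw [ringProfile_eq_zero_iff] at h h'
  have h1 := Fin.add_natCast_ne_self (t := 1) (by omega) (by omega) (n := n)
  have h2 := Fin.add_natCast_ne_self (t := 2) (by omega) (by omega) (n := n)
  push_cast at h1 h2
  rcases h with rfl | rfl
  · rfl
  · rcases h' with h' | h'
    · exact absurd (by linear_combination h') (h2 j)
    · exact absurd (by linear_combination h') (h1 (j + 1))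

def IsRingProfileOnEdges (k : Fin n → ℕ) : Prop :=
  ∀ m, ∃ j, k m = ringProfile j m ∧ k (m + 1) = ringProfile j (m + 1)

namespace IsRingProfileOnEdges

variable {k : Fin n → ℕ} {j m : Fin n}

lemma eq_succ (hk : IsRingProfileOnEdges k) (hm : k m = ringProfile j m)
    (h0 : ringProfile j m ≠ 0) : k (m + 1) = ringProfile j (m + 1) := by
  obtain ⟨j', h1, h2⟩ := hk m
  obtain rfl := eq_of_ringProfile_eq (h1.symm.trans hm) h0
  exact h2

lemma eq_of_eq_succ (hk : IsRingProfileOnEdges k) (hm : k (m + 1) = ringProfile j (m + 1))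
    (h0 : ringProfile j (m + 1) ≠ 0) : k m = ringProfile j m := by
  obtain ⟨j', h1, h2⟩ := hk m
  obtain rfl := eq_of_ringProfile_eq (h2.symm.trans hm) h0
  exact h1

/-- The non-zero entries pin down `j` and propagate in both directions along the arc
`j + 2, …, j - 1`; the two zeros at `j` and `j + 1` are then reached from its two ends. -/
theorem exists_eq (hn : 3 ≤ n) (hk : IsRingProfileOnEdges k) {p : Fin n} (hp : k p ≠ 0) :
    ∃ j, ∀ i, k i = ringProfile j i := by
  obtain ⟨j, hkp, -⟩ := hk p
  refine ⟨j, ?_⟩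
  obtain ⟨l, rfl⟩ : ∃ l, n = l + 3 := ⟨n - 3, by omega⟩
  have harc : ∀ t ≤ l, (k (j + 2 + (t : Fin (l + 3))) = ringProfile j (j + 2 + (t : Fin (l + 3)))
      ↔ k (j + 2) = ringProfile j (j + 2)) := by
    intro t
    induction t with
    | zero => simp
    | succ t ih =>
      intro ht
      have hsucc : j + 2 + ((t + 1 : ℕ) : Fin (l + 3)) = j + 2 + (t : Fin (l + 3)) + 1 := by
        push_cast; ring
      rw [← ih (by omega), hsucc]
      exact ⟨fun h => hk.eq_of_eq_succ h (hsucc ▸ ringProfile_add_two_add_ne_zero (by omega) j),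
        fun h => hk.eq_succ h (ringProfile_add_two_add_ne_zero (by omega) j)⟩
  have hstart : k (j + 2) = ringProfile j (j + 2) := by
    have hp' : ringProfile j p ≠ 0 := hkp ▸ hp
    rcases Fin.eq_or_eq_add_one_or_eq_add_two_add p j with rfl | rfl | ⟨t, ht, rfl⟩
    · exact absurd (ringProfile_eq_zero_iff.2 (Or.inl rfl)) hp'
    · exact absurd (ringProfile_eq_zero_iff.2 (Or.inr rfl)) hp'
    · exact (harc t ht).1 hkp
  intro i
  rcases Fin.eq_or_eq_add_one_or_eq_add_two_add i j with hi | hi | ⟨t, ht, rfl⟩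
  · have hend : j + 2 + (l : Fin (l + 3)) + 1 = j := by
      linear_combination Fin.natCast_add_three_eq_zero l
    have := hk.eq_succ ((harc l le_rfl).2 hstart) (ringProfile_add_two_add_ne_zero le_rfl j)
    rw [hend] at this
    rwa [hi]
  · have h2 : j + 1 + 1 = j + 2 := by ring
    rw [hi]
    exact hk.eq_of_eq_succ (h2 ▸ hstart) (h2 ▸ ringProfile_add_two_ne_zero hn j)
  · exact (harc t ht).2 hstart

end IsRingProfileOnEdges

end RingProfile

section RingLanguage

variable {α : Type} [Fintype α] [DecidableEq α] {n : ℕ} [NeZero n]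

def ringEdge (a : Fin n → α) (i : Fin n) : Set α := {a i, a (i + 1)}

/-- A variant of the paper's candidate counter-example `L_cand`. -/
def ringLang (a : Fin n → α) : Set (List α) :=
  {w | ∃ j, ∀ i, w.count (a i) = ringProfile j i}

/-- The empty word is not in `ringLang a`, but it lies in the synchronous product over the
edges: its projection onto the `m`-th edge is that of any word of the `m`-th block. -/
lemma not_decomposable_ringLang (hn : 3 ≤ n) {a : Fin n → α} (ha : Function.Bijective a)
    {Δ : Distr α} (hΔ : ∀ S ∈ Δ.comps, ∃ m, S ⊆ ringEdge a m) :
    ¬ Decomposable (ringLang a) Δ := by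
  intro hdec
  have hnil : [] ∉ ringLang a := fun ⟨j, hj⟩ =>
    ringProfile_add_two_ne_zero hn j (hj (j + 2)).symm
  refine hnil (hdec ▸ Set.mem_iInter₂.2 fun S hS => ?_)
  obtain ⟨m, hSm⟩ := hΔ S hS
  let e := Equiv.ofBijective a ha
  obtain ⟨u, hu⟩ := exists_list_count_eq_s9 fun x => ringProfile m (e.symm x)
  have hu_mem : u ∈ ringLang a := ⟨m, fun i => by rw [hu, Equiv.ofBijective_symm_apply_apply]⟩
  refine ⟨u, hu_mem, projA_eq_nil_iff.2 fun x hx hxS => ?_⟩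
  have hx0 : ringProfile m (e.symm x) ≠ 0 := hu x ▸ (List.count_pos_iff.2 hx).ne'
  rcases hSm hxS with rfl | rfl
  · exact hx0 (by simp [e, ringProfile])
  · exact hx0 (by simp [e, ringProfile])

lemma decomposable_ringLang (hn : 3 ≤ n) {a : Fin n → α} {Δ : Distr α}
    (hedge : ∀ m, ∃ S ∈ Δ.comps, ringEdge a m ⊆ S)
    (hshared : ∃ S ∈ Δ.comps, ∃ i c, i ≠ c ∧ ringEdge a i ⊆ S ∧ ringEdge a c ⊆ S) :
    Decomposable (ringLang a) Δ := by
  refine decomposable_iff_subset.2 fun w hw => ?_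
  have hlocal : ∀ S ∈ Δ.comps, ∃ j, ∀ i, a i ∈ S → w.count (a i) = ringProfile j i := by
    intro S hS
    obtain ⟨u, ⟨j, hu⟩, huw⟩ := Set.mem_iInter₂.1 hw S hS
    exact ⟨j, fun i hi => by rw [← count_projA hi, ← huw, count_projA hi, hu]⟩
  have hedge_local : IsRingProfileOnEdges fun i => w.count (a i) := by
    intro m
    obtain ⟨S, hS, hmS⟩ := hedge m
    obtain ⟨j, hj⟩ := hlocal S hS
    exact ⟨j, hj m (hmS (Or.inl rfl)), hj (m + 1) (hmS (Or.inr rfl))⟩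
  -- two distinct edges in one component cannot both be zero edges of the same profile
  have hnonzero : ∃ p, w.count (a p) ≠ 0 := by
    obtain ⟨S, hS, i, c, hic, hiS, hcS⟩ := hshared
    obtain ⟨j, hj⟩ := hlocal S hS
    by_contra! h0
    have hzero_edge : ∀ m, ringEdge a m ⊆ S → m = j := fun m hmS =>
      eq_of_ringProfile_eq_zero hn ((hj m (hmS (Or.inl rfl))).symm.trans (h0 m))
        ((hj (m + 1) (hmS (Or.inr rfl))).symm.trans (h0 (m + 1)))
    exact hic ((hzero_edge i hiS).trans (hzero_edge c hcS).symm)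
  obtain ⟨p, hp⟩ := hnonzero
  exact hedge_local.exists_eq hn hp

end RingLanguage

/-- For every `n ≥ 3`, the ring distribution
`({a_0,a_1}, {a_1,a_2}, …, {a_{n−1},a_0})` of an alphabet of `n` pairwise
distinct symbols has no reduction. -/
theorem statement_9 {α : Type} [Fintype α] (n : ℕ) (hn : 3 ≤ n)
    (a : Fin n → α) (ha : Function.Bijective a) (Δ : Distr α)
    (hΔ : Δ.comps = {S : Set α | ∃ i : Fin n,
      S = {a i, a ⟨((i : ℕ) + 1) % n, Nat.mod_lt _ (by omega)⟩}}) :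
    ¬ ∃ P : Set (Distr α), IsReduction P Δ := by
  rintro ⟨P, -, hsize, hiff⟩
  classical
  have : NeZero n := ⟨by omega⟩
  have hcomps : Δ.comps = Set.range (ringEdge a) := by
    have hsucc : ∀ i : Fin n, (⟨((i : ℕ) + 1) % n, Nat.mod_lt _ (by omega)⟩ : Fin n) = i + 1 :=
      fun i => Fin.ext (by simp [Fin.val_add])
    simp only [hsucc] at hΔ
    rw [hΔ]
    ext S
    simp [ringEdge, eq_comm]
  have hcard : Δ.comps.ncard ≤ n := by
    rw [hcomps, ← Nat.card_coe_set_eq]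
    exact (Finite.card_range_le _).trans_eq (by simp)
  have hcover : ∀ Δ' ∈ P, ∀ m, ∃ S ∈ Δ'.comps, ringEdge a m ⊆ S := by
    intro Δ' hΔ' m
    have hne : a m ≠ a (m + 1) :=
      ha.1.ne (by simpa using (Fin.add_natCast_ne_self (t := 1) (by omega) (by omega) m).symm)
    obtain ⟨S, hS, hmS, hm1S⟩ := exists_comp_mem_of_decomposable_imp
      (fun L hL => (hiff L).1 hL Δ' hΔ') (hcomps ▸ Set.mem_range_self m) hne
      (Or.inl rfl) (Or.inr rfl)
    exact ⟨S, hS, Set.insert_subset hmS (Set.singleton_subset_iff.2 hm1S)⟩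
  refine not_decomposable_ringLang hn ha (fun S hS => ?_) ((hiff _).2 fun Δ' hΔ' => ?_)
  · obtain ⟨m, rfl⟩ := hcomps ▸ hS
    exact ⟨m, subset_rfl⟩
  · refine decomposable_ringLang hn (hcover Δ' hΔ') (exists_comp_superset_of_ncard_lt
      (hcover Δ' hΔ') ?_)
    simpa using (hsize Δ' hΔ').trans_le hcard
end
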